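/- Let E be a finite-dimensional real inner product space, let A be a symmetric (self-adjoint) endomorphism of E, let (v₁,…,vₙ) be an orthonormal basis of eigenvectors of A with eigenvalues λ₁,…,λₙ. Then for all indices i < j and k < l: (A∧id)(vᵢ,vⱼ,v_k,v_l) = (λᵢ + λⱼ)/2 if (i,j) = (k,l), and (A∧id)(vᵢ,vⱼ,v_k,v_l) = 0 if (i,j) ≠ (k,l). (That is, the eigenvalues of the curvature operator A∧id on 2-vectors are the numbers (λᵢ + λⱼ)/2 for i < j.) -/

import Mathlib

open scoped RealInnerProductSpace

/-- The tensor `A ∧ id` associated to a bilinear form `A` on a real inner product space: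
`(A∧id)(x,y,z,w) = ½(A(x,z)⟨y,w⟩ + ⟨x,z⟩A(y,w) − A(x,w)⟨y,z⟩ − ⟨x,w⟩A(y,z))`. -/
noncomputable def wedgeId {E : Type*} [NormedAddCommGroup E] [InnerProductSpace ℝ E]
    (A : E → E → ℝ) (x y z w : E) : ℝ :=
  (A x z * ⟪y, w⟫ + ⟪x, z⟫ * A y w - A x w * ⟪y, z⟫ - ⟪x, w⟫ * A y z) / 2

section Eigenbasis

variable {E ι : Type*} [NormedAddCommGroup E] [InnerProductSpace ℝ E]
  {A : E →ₗ[ℝ] E} {v : ι → E} {lam : ι → ℝ}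

theorem wedgeId_eigenvectors [DecidableEq ι] (hv : Orthonormal ℝ v)
    (heig : ∀ i, A (v i) = lam i • v i) (i j k l : ι) :
    wedgeId (fun x y => ⟪A x, y⟫) (v i) (v j) (v k) (v l) =
      (lam i + lam j) * ((if i = k ∧ j = l then 1 else 0) - (if i = l ∧ j = k then 1 else 0))
        / 2 := by
  have hinner : ∀ a b, ⟪v a, v b⟫ = if a = b then (1 : ℝ) else 0 :=
    fun a b => orthonormal_iff_ite.mp hv a b
  simp only [wedgeId, heig, real_inner_smul_left, hinner]
  split_ifs <;> simp_all
  ring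

theorem wedgeId_eigenvectors_of_lt [LinearOrder ι] (hv : Orthonormal ℝ v)
    (heig : ∀ i, A (v i) = lam i • v i) {i j k l : ι} (hij : i < j) (hkl : k < l) :
    wedgeId (fun x y => ⟪A x, y⟫) (v i) (v j) (v k) (v l) =
      if (i, j) = (k, l) then (lam i + lam j) / 2 else 0 := by
  have hswap : ¬(i = l ∧ j = k) := by
    rintro ⟨rfl, rfl⟩
    exact lt_asymm hij hkl
  rw [wedgeId_eigenvectors hv heig, if_neg hswap]
  split_ifs <;> simp_all

end Eigenbasis

theorem stmt8 {E : Type*} [NormedAddCommGroup E] [InnerProductSpace ℝ E] {n : ℕ}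
    (A : E →ₗ[ℝ] E)
    (v : OrthonormalBasis (Fin n) ℝ E) (lam : Fin n → ℝ)
    (heig : ∀ i, A (v i) = lam i • v i) :
    ∀ i j k l : Fin n, i < j → k < l →
      (((i, j) = (k, l)) →
        wedgeId (fun x y => ⟪A x, y⟫) (v i) (v j) (v k) (v l) = (lam i + lam j) / 2) ∧
      (((i, j) ≠ (k, l)) →
        wedgeId (fun x y => ⟪A x, y⟫) (v i) (v j) (v k) (v l) = 0) := by
  intro i j k l hij hkl
  rw [wedgeId_eigenvectors_of_lt v.orthonormal heig hij hkl]
  exact ⟨fun h => if_pos h, fun h => if_neg h⟩
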